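/- arXiv:2205.14053 — 6 statements merged into one kernel-verified Lean document; each statement's English description precedes it below -/
import Mathlib

section
/- If each inclusion C_n ⊆ A_n is regular, then the inclusion C ⊆ A is regular; that is, the smallest closed *-subalgebra of A containing N_A(C) is A itself. -/
variable {A : Type*} [NonUnitalCStarAlgebra A]

/-- The set of normalisers of `D` inside the subset `B` of `A`:
`N_B(D) = {m ∈ B : m* D m ⊆ D and m D m* ⊆ D}`. -/
def relNormalizers (B D : Set A) : Set A :=
  {m | m ∈ B ∧ (∀ c ∈ D, star m * c * m ∈ D) ∧ (∀ c ∈ D, m * c * star m ∈ D)}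

/-- The inclusion `D ⊆ B` is regular: the smallest closed *-subalgebra of `B`
containing `N_B(D)` is `B` itself. -/
def IsRegularIncl (B D : Set A) : Prop :=
  closure ((NonUnitalStarAlgebra.adjoin ℂ (relNormalizers B D) :
    NonUnitalStarSubalgebra ℂ A) : Set A) = B

theorem stmt1
    (A_ C_ : ℕ → NonUnitalStarSubalgebra ℂ A)
    (hAclosed : ∀ n, IsClosed (A_ n : Set A))
    (hCclosed : ∀ n, IsClosed (C_ n : Set A))
    (hAmono : ∀ n, (A_ n : Set A) ⊆ (A_ (n + 1) : Set A))
    (hCmono : ∀ n, (C_ n : Set A) ⊆ (C_ (n + 1) : Set A))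
    (hCA : ∀ n, (C_ n : Set A) ⊆ (A_ n : Set A))
    (hAdense : Dense (⋃ n, (A_ n : Set A)))
    (hNormIncl : ∀ n, relNormalizers (A_ n : Set A) (C_ n : Set A) ⊆
      relNormalizers (A_ (n + 1) : Set A) (C_ (n + 1) : Set A))
    (hRegn : ∀ n, IsRegularIncl (A_ n : Set A) (C_ n : Set A)) :
    IsRegularIncl (Set.univ : Set A) (closure (⋃ k, (C_ k : Set A))) := by
  set D : Set A := closure (⋃ k, (C_ k : Set A)) with hD
  -- monotonicity of C_ in ⊆
  have hCle : ∀ {j k : ℕ}, j ≤ k → (C_ j : Set A) ⊆ (C_ k : Set A) := by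
    intro j k hjk
    exact monotone_nat_of_le_succ (f := fun n => (C_ n : Set A)) hCmono hjk
  have hNle : ∀ {j k : ℕ}, j ≤ k →
      relNormalizers (A_ j : Set A) (C_ j : Set A) ⊆
      relNormalizers (A_ k : Set A) (C_ k : Set A) := by
    intro j k hjk
    exact monotone_nat_of_le_succ
      (f := fun n => relNormalizers (A_ n : Set A) (C_ n : Set A)) hNormIncl hjk
  -- Each normaliser of C_n in A_n is a normaliser of D in univ
  have key : ∀ n, relNormalizers (A_ n : Set A) (C_ n : Set A) ⊆
      relNormalizers (Set.univ : Set A) D := by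
    intro n m hm
    have hmaps1 : Set.MapsTo (fun c => star m * c * m)
        (⋃ k, (C_ k : Set A)) (⋃ k, (C_ k : Set A)) := by
      rintro c hc
      simp only [Set.mem_iUnion] at hc ⊢
      obtain ⟨k, hk⟩ := hc
      rcases le_total k n with h | h
      · exact ⟨n, ((hNle (le_refl n) hm).2.1 c (hCle h hk))⟩
      · exact ⟨k, (hNle h hm).2.1 c hk⟩
    have hmaps2 : Set.MapsTo (fun c => m * c * star m)
        (⋃ k, (C_ k : Set A)) (⋃ k, (C_ k : Set A)) := by
      rintro c hc
      simp only [Set.mem_iUnion] at hc ⊢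
      obtain ⟨k, hk⟩ := hc
      rcases le_total k n with h | h
      · exact ⟨n, ((hNle (le_refl n) hm).2.2 c (hCle h hk))⟩
      · exact ⟨k, (hNle h hm).2.2 c hk⟩
    have hcont1 : Continuous (fun c : A => star m * c * m) := by fun_prop
    have hcont2 : Continuous (fun c : A => m * c * star m) := by fun_prop
    refine ⟨Set.mem_univ m, ?_, ?_⟩
    · intro c hc
      exact map_mem_closure (f := fun c : A => star m * c * m) hcont1 hc hmaps1
    · intro c hc
      exact map_mem_closure (f := fun c : A => m * c * star m) hcont2 hc hmaps2
  -- closure of adjoin contains each A_n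
  have hTclosed : IsClosed (closure ((NonUnitalStarAlgebra.adjoin ℂ
      (relNormalizers (Set.univ : Set A) D) : NonUnitalStarSubalgebra ℂ A) : Set A)) :=
    isClosed_closure
  have hsub : ∀ n, (A_ n : Set A) ⊆ closure ((NonUnitalStarAlgebra.adjoin ℂ
      (relNormalizers (Set.univ : Set A) D) : NonUnitalStarSubalgebra ℂ A) : Set A) := by
    intro n
    rw [← hRegn n]
    apply closure_mono
    exact NonUnitalStarAlgebra.adjoin_le ((key n).trans (NonUnitalStarAlgebra.subset_adjoin ℂ _))
  have hUnion : (⋃ n, (A_ n : Set A)) ⊆ closure ((NonUnitalStarAlgebra.adjoin ℂ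
      (relNormalizers (Set.univ : Set A) D) : NonUnitalStarSubalgebra ℂ A) : Set A) :=
    Set.iUnion_subset hsub
  unfold IsRegularIncl
  apply Set.eq_univ_of_univ_subset
  calc (Set.univ : Set A) = closure (⋃ n, (A_ n : Set A)) := (hAdense.closure_eq).symm
    _ ⊆ _ := hTclosed.closure_subset_iff.mpr hUnion
end

section
/- The map P is an almost faithful conditional expectation from A onto C: its range is contained in C, P(c) = c for all c ∈ C, and whenever a ∈ A satisfies P(b* a* a b) = 0 for all b ∈ A, then a = 0. -/
/-! Range, identity on `C` and positivity pass from `⋃ Aₙ` to `A` by continuity and density.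
For almost faithfulness, suppose `a ≠ 0` and put `h = a⋆a`. Approximate `h` within `‖h‖/4`
by `k = x⋆x` with `x` in some `Aₙ`, and cut `k` off spectrally: `e = (k - ‖h‖/2)₊ ∈ Aₙ`. Then
`e k e ≥ (‖h‖/2) e²`, so `e h e ≥ (‖h‖/4) e²`, and `P (e h e) = 0` together with positivity of `P`
forces `Pₙ (e²) = 0`, hence `e = 0` by faithfulness of `Pₙ`. But `e = 0` means `‖k‖ ≤ ‖h‖/2`,
which is incompatible with `‖k - h‖ < ‖h‖/4`. -/

variable {A : Type*} [NonUnitalCStarAlgebra A]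

variable [PartialOrder A] [StarOrderedRing A]

/-- `Q` is a conditional expectation from `B` onto `D`: a contractive linear map on `B`
with range in `D`, restricting to the identity on `D`, positive, and `D`-bimodular. -/
def IsCondExpOn (B D : Set A) (Q : A → A) : Prop :=
  (∀ a ∈ B, ‖Q a‖ ≤ ‖a‖) ∧ (∀ a ∈ B, ∀ b ∈ B, Q (a + b) = Q a + Q b) ∧
    (∀ (z : ℂ), ∀ a ∈ B, Q (z • a) = z • Q a) ∧ (∀ a ∈ B, Q a ∈ D) ∧
    (∀ d ∈ D, Q d = d) ∧ (∀ a ∈ B, 0 ≤ a → 0 ≤ Q a) ∧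
    (∀ d₁ ∈ D, ∀ d₂ ∈ D, ∀ a ∈ B, Q (d₁ * a * d₂) = d₁ * Q a * d₂)

open Set

/-- `(k - c)₊`; for `c < 0` the cutoff function does not vanish at `0`, so `cfcₙ` returns the
junk value `0`. -/
noncomputable def spectralCutoff (c : ℝ) (k : A) : A :=
  cfcₙ (fun t : ℝ => max (t - c) 0) k

lemma smul_mul_self_spectralCutoff_le {c : ℝ} (hc : 0 ≤ c) {k : A} (hk : IsSelfAdjoint k) :
    c • (spectralCutoff c k * spectralCutoff c k) ≤
      spectralCutoff c k * k * spectralCutoff c k := by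
  have hlhs : c • (spectralCutoff c k * spectralCutoff c k) =
      cfcₙ (fun t => c * (max (t - c) 0 * max (t - c) 0)) k := by
    rw [spectralCutoff, ← cfcₙ_mul _ _ k, ← cfcₙ_smul c _ k]; rfl
  have hrhs : spectralCutoff c k * k * spectralCutoff c k =
      cfcₙ (fun t => max (t - c) 0 * t * max (t - c) 0) k := by
    rw [spectralCutoff, cfcₙ_mul _ _ k, cfcₙ_mul _ _ k, cfcₙ_id' ℝ k]
  rw [hlhs, hrhs]
  refine cfcₙ_mono fun t _ => ?_
  rcases le_or_gt t c with htc | htc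
  · simp [max_eq_right (sub_nonpos.2 htc)]
  · rw [max_eq_left (sub_nonneg.2 htc.le)]
    nlinarith [sq_nonneg (t - c)]

lemma smul_mul_self_spectralCutoff_le_of_norm_sub_le {c ε : ℝ} (hc : 0 ≤ c) {k h : A}
    (hk : IsSelfAdjoint k) (hh : IsSelfAdjoint h) (hkh : ‖k - h‖ ≤ ε) :
    (c - ε) • (spectralCutoff c k * spectralCutoff c k) ≤
      spectralCutoff c k * h * spectralCutoff c k := by
  set e := spectralCutoff c k
  have he : star e = e := (cfcₙ_predicate _ k : IsSelfAdjoint e).star_eq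
  have hdiff : e * (k - h) * e ≤ ε • (e * e) := by
    calc e * (k - h) * e ≤ ‖k - h‖ • (e * e) := by
          simpa [he] using CStarAlgebra.star_left_conjugate_le_norm_smul (a := e) (hk.sub hh)
      _ ≤ ε • (e * e) :=
          smul_le_smul_of_nonneg_right hkh (by simpa [he] using star_mul_self_nonneg e)
  calc (c - ε) • (e * e) = c • (e * e) - ε • (e * e) := sub_smul _ _ _
    _ ≤ e * k * e - e * (k - h) * e := sub_le_sub (smul_mul_self_spectralCutoff_le hc hk) hdiff
    _ = e * h * e := by noncomm_ring

lemma norm_le_of_spectralCutoff_eq_zero {c : ℝ} (hc : 0 ≤ c) {k : A} (hk : 0 ≤ k)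
    (he : spectralCutoff c k = 0) : ‖k‖ ≤ c := by
  rw [← cfcₙ_id' ℝ k]
  refine norm_cfcₙ_le fun x hx => ?_
  have hx0 : 0 ≤ x := quasispectrum_nonneg_of_nonneg k hk x hx
  have hφx := norm_apply_le_norm_cfcₙ (fun t : ℝ => max (t - c) 0) k hx
  rw [← spectralCutoff, he, norm_zero, norm_le_zero_iff, max_eq_right_iff, sub_nonpos] at hφx
  rwa [Real.norm_of_nonneg hx0]

lemma nonneg_apply_of_dense {B : Type*} [NonUnitalCStarAlgebra B] [PartialOrder B]
    [StarOrderedRing B] {U : Set A} (hU : Dense U) {f : A → B} (hf : Continuous f)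
    (hfU : ∀ y ∈ U, 0 ≤ f (star y * y)) {a : A} (ha : 0 ≤ a) : 0 ≤ f a := by
  have hclosed : IsClosed {y : A | 0 ≤ f (star y * y)} :=
    CStarAlgebra.isClosed_nonneg.preimage (hf.comp (continuous_star.mul continuous_id))
  have hsqrt : 0 ≤ f (star (CFC.sqrt a) * CFC.sqrt a) :=
    hclosed.closure_subset_iff.2 hfU (hU.closure_eq ▸ mem_univ _)
  rwa [(CFC.sqrt_nonneg a).isSelfAdjoint.star_eq, CFC.sqrt_mul_sqrt_self a ha] at hsqrt

lemma Dense.exists_star_mul_self_mem_ball {U : Set A} (hU : Dense U) {a : A} (ha : 0 ≤ a)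
    {ε : ℝ} (hε : 0 < ε) : ∃ x ∈ U, ‖star x * x - a‖ < ε := by
  have hopen : IsOpen {y : A | ‖star y * y - a‖ < ε} :=
    isOpen_lt ((continuous_star.mul continuous_id).sub continuous_const).norm continuous_const
  have hsqrt : CFC.sqrt a ∈ {y : A | ‖star y * y - a‖ < ε} := by
    simpa [(CFC.sqrt_nonneg a).isSelfAdjoint.star_eq, CFC.sqrt_mul_sqrt_self a ha] using hε
  obtain ⟨x, hx, hxU⟩ := hU.inter_open_nonempty _ hopen ⟨_, hsqrt⟩
  exact ⟨x, hxU, hx⟩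

variable {B : Type*} [NonUnitalCStarAlgebra B] [PartialOrder B] [StarOrderedRing B]

lemma map_eq_zero_of_smul_le_of_map_eq_zero {Q : A →L[ℂ] B} (hQ : ∀ a, 0 ≤ a → 0 ≤ Q a)
    {r : ℝ} (hr : 0 < r) {b c : A} (hb : 0 ≤ b) (hbc : r • b ≤ c) (hc : Q c = 0) : Q b = 0 := by
  have h1 : 0 ≤ Q (c - r • b) := hQ _ (sub_nonneg.2 hbc)
  rw [map_sub, hc, zero_sub, Q.map_smul_of_tower, neg_nonneg] at h1
  exact (smul_eq_zero.1 (le_antisymm h1 (smul_nonneg hr.le (hQ b hb)))).resolve_left hr.ne'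

theorem eq_zero_of_forall_map_conj_eq_zero {ι : Type*} (S : ι → NonUnitalStarSubalgebra ℂ A)
    (hS : ∀ i, IsClosed (S i : Set A)) (hdense : Dense (⋃ i, (S i : Set A)))
    (Q : A →L[ℂ] B) (hQpos : ∀ i, ∀ a ∈ S i, 0 ≤ a → 0 ≤ Q a)
    (hQfaithful : ∀ i, ∀ a ∈ S i, Q (star a * a) = 0 → a = 0)
    {a : A} (ha : ∀ b, Q (star b * star a * a * b) = 0) : a = 0 := by
  have hQ : ∀ a, 0 ≤ a → 0 ≤ Q a := fun a => nonneg_apply_of_dense hdense Q.continuous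
    fun y hy => by
      obtain ⟨i, hyi⟩ := mem_iUnion.1 hy
      exact hQpos i _ (mul_mem (star_mem hyi) hyi) (star_mul_self_nonneg y)
  by_contra ha0
  set h := star a * a
  have hh : 0 < ‖h‖ := by simpa [h, CStarRing.norm_star_mul_self] using ha0
  obtain ⟨x, hxU, hxh⟩ := hdense.exists_star_mul_self_mem_ball (star_mul_self_nonneg a)
    (div_pos hh four_pos)
  obtain ⟨i, hxi⟩ := mem_iUnion.1 hxU
  set k := star x * x
  have hk : 0 ≤ k := star_mul_self_nonneg x
  set e := spectralCutoff (‖h‖ / 2) k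
  have he : e ∈ S i := cfcₙ_mem (hs := hS i) _ (mul_mem (star_mem hxi) hxi)
  have hee : star e = e := (cfcₙ_predicate _ k : IsSelfAdjoint e).star_eq
  have hconj : (‖h‖ / 4) • (e * e) ≤ e * h * e := by
    have := smul_mul_self_spectralCutoff_le_of_norm_sub_le (c := ‖h‖ / 2) (by positivity)
      hk.isSelfAdjoint (star_mul_self_nonneg a).isSelfAdjoint hxh.le
    rwa [show ‖h‖ / 2 - ‖h‖ / 4 = ‖h‖ / 4 by ring] at this
  have hQe : Q (e * e) = 0 := map_eq_zero_of_smul_le_of_map_eq_zero hQ (div_pos hh four_pos)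
    (by simpa [hee] using star_mul_self_nonneg e) hconj (by simpa [hee, h, mul_assoc] using ha e)
  have hk_le : ‖k‖ ≤ ‖h‖ / 2 := norm_le_of_spectralCutoff_eq_zero (by positivity) hk
    (hQfaithful i e he (by rwa [hee]))
  have := norm_sub_norm_le h k
  rw [norm_sub_rev] at this
  linarith

theorem stmt2_general
    (A_ C_ : ℕ → NonUnitalStarSubalgebra ℂ A)
    (hAclosed : ∀ n, IsClosed (A_ n : Set A))
    (hCA : ∀ n, (C_ n : Set A) ⊆ (A_ n : Set A))
    (hAdense : Dense (⋃ n, (A_ n : Set A)))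
    (Pn : ℕ → A → A)
    (hPn : ∀ n, IsCondExpOn (A_ n : Set A) (C_ n : Set A) (Pn n))
    (hPnFaithful : ∀ n, ∀ a ∈ (A_ n : Set A), Pn n (star a * a) = 0 → a = 0)
    (P : A →L[ℂ] A)
    (hP : ∀ n, ∀ a ∈ (A_ n : Set A), P a = Pn n a) :
    (∀ a : A, P a ∈ closure (⋃ k, (C_ k : Set A))) ∧
      (∀ c ∈ closure (⋃ k, (C_ k : Set A)), P c = c) ∧
      (∀ a : A, (∀ b : A, P (star b * star a * a * b) = 0) → a = 0) := by
  have hmem : ∀ n, ∀ a ∈ A_ n, P a ∈ C_ n := fun n a ha => hP n a ha ▸ (hPn n).2.2.2.1 a ha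
  have hid : ∀ n, ∀ c ∈ C_ n, P c = c := fun n c hc =>
    (hP n c (hCA n hc)).trans ((hPn n).2.2.2.2.1 c hc)
  have hpos : ∀ n, ∀ a ∈ A_ n, 0 ≤ a → 0 ≤ P a := fun n a ha =>
    hP n a ha ▸ (hPn n).2.2.2.2.2.1 a ha
  have hfaithful : ∀ n, ∀ a ∈ A_ n, P (star a * a) = 0 → a = 0 := fun n a ha =>
    hP n _ (mul_mem (star_mem ha) ha) ▸ hPnFaithful n a ha
  refine ⟨fun a => ?_, fun c hc => ?_, fun a => eq_zero_of_forall_map_conj_eq_zero A_ hAclosed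
    hAdense P hpos hfaithful⟩
  · have hmaps : MapsTo P (⋃ n, (A_ n : Set A)) (closure (⋃ k, (C_ k : Set A))) := fun x hx =>
      let ⟨n, hxn⟩ := mem_iUnion.1 hx
      subset_closure (mem_iUnion.2 ⟨n, hmem n x hxn⟩)
    simpa using hmaps.closure P.continuous (hAdense.closure_eq ▸ mem_univ a)
  · refine EqOn.closure (fun c hc => ?_) P.continuous continuous_id hc
    obtain ⟨n, hcn⟩ := mem_iUnion.1 hc
    exact hid n c hcn

theorem stmt2
    (A_ C_ : ℕ → NonUnitalStarSubalgebra ℂ A)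
    (hAclosed : ∀ n, IsClosed (A_ n : Set A))
    (hCclosed : ∀ n, IsClosed (C_ n : Set A))
    (hAmono : ∀ n, (A_ n : Set A) ⊆ (A_ (n + 1) : Set A))
    (hCmono : ∀ n, (C_ n : Set A) ⊆ (C_ (n + 1) : Set A))
    (hCA : ∀ n, (C_ n : Set A) ⊆ (A_ n : Set A))
    (hAdense : Dense (⋃ n, (A_ n : Set A)))
    (Pn : ℕ → A → A)
    (hPn : ∀ n, IsCondExpOn (A_ n : Set A) (C_ n : Set A) (Pn n))
    (hPnFaithful : ∀ n, ∀ a ∈ (A_ n : Set A), Pn n (star a * a) = 0 → a = 0)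
    (hPnCompat : ∀ n, ∀ a ∈ (A_ n : Set A), Pn (n + 1) a = Pn n a)
    (P : A →L[ℂ] A)
    (hP : ∀ n, ∀ a ∈ (A_ n : Set A), P a = Pn n a) :
    (∀ a : A, P a ∈ closure (⋃ k, (C_ k : Set A))) ∧
      (∀ c ∈ closure (⋃ k, (C_ k : Set A)), P c = c) ∧
      (∀ a : A, (∀ b : A, P (star b * star a * a * b) = 0) → a = 0) :=
  stmt2_general A_ C_ hAclosed hCA hAdense Pn hPn hPnFaithful P hP
end

section
/- Let (M_n)_{n∈ℕ} be a sequence such that each M_n is a slice for the inclusion C_n ⊆ A_n and M_n ⊆ M_{n+1} for all n, and let F be the closure of ⋃_n M_n in A. Then F is a slice for the inclusion C ⊆ A. -/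
variable {A : Type*} [NonUnitalCStarAlgebra A]

/-- A slice for the inclusion `D ⊆ B`: a closed linear subspace `M` of `B` with
`M ⊆ N_B(D)`, `DM ⊆ M` and `MD ⊆ M`. -/
def IsSlice (B D M : Set A) : Prop :=
  IsClosed M ∧ (0 : A) ∈ M ∧ (∀ x ∈ M, ∀ y ∈ M, x + y ∈ M) ∧
    (∀ (z : ℂ), ∀ x ∈ M, z • x ∈ M) ∧ M ⊆ relNormalizers B D ∧
    (∀ d ∈ D, ∀ m ∈ M, d * m ∈ M) ∧ (∀ d ∈ D, ∀ m ∈ M, m * d ∈ M)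

theorem stmt3
    (A_ C_ : ℕ → NonUnitalStarSubalgebra ℂ A)
    (hAclosed : ∀ n, IsClosed (A_ n : Set A))
    (hCclosed : ∀ n, IsClosed (C_ n : Set A))
    (hAmono : ∀ n, (A_ n : Set A) ⊆ (A_ (n + 1) : Set A))
    (hCmono : ∀ n, (C_ n : Set A) ⊆ (C_ (n + 1) : Set A))
    (hCA : ∀ n, (C_ n : Set A) ⊆ (A_ n : Set A))
    (hAdense : Dense (⋃ n, (A_ n : Set A)))
    (hNormIncl : ∀ n, relNormalizers (A_ n : Set A) (C_ n : Set A) ⊆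
      relNormalizers (A_ (n + 1) : Set A) (C_ (n + 1) : Set A))
    (M : ℕ → Set A)
    (hslice : ∀ n, IsSlice (A_ n : Set A) (C_ n : Set A) (M n))
    (hMmono : ∀ n, M n ⊆ M (n + 1)) :
    IsSlice (Set.univ : Set A) (closure (⋃ k, (C_ k : Set A))) (closure (⋃ n, M n)) := by

  have hMmono' : Monotone M := monotone_nat_of_le_succ hMmono
  have hCmono' : Monotone (fun n => (C_ n : Set A)) := monotone_nat_of_le_succ hCmono
  set S := ⋃ n, M n with hS
  set T := ⋃ k, (C_ k : Set A) with hT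
  have hmemS : ∀ {n x}, x ∈ M n → x ∈ S := fun {n x} hx => Set.mem_iUnion.2 ⟨n, hx⟩
  have hmemT : ∀ {n x}, x ∈ (C_ n : Set A) → x ∈ T := fun {n x} hx => Set.mem_iUnion.2 ⟨n, hx⟩
  have haddS : ∀ x ∈ S, ∀ y ∈ S, x + y ∈ S := by
    intro x hx y hy
    obtain ⟨a, hx⟩ := Set.mem_iUnion.1 hx
    obtain ⟨b, hy⟩ := Set.mem_iUnion.1 hy
    exact hmemS ((hslice (max a b)).2.2.1 x (hMmono' (le_max_left a b) hx) y
      (hMmono' (le_max_right a b) hy))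
  have hsmulS : ∀ (z : ℂ), ∀ x ∈ S, z • x ∈ S := by
    intro z x hx
    obtain ⟨a, hx⟩ := Set.mem_iUnion.1 hx
    exact hmemS ((hslice a).2.2.2.1 z x hx)
  have hnorm1 : ∀ m ∈ S, ∀ c ∈ T, star m * c * m ∈ T := by
    intro m hm c hc
    obtain ⟨a, hm⟩ := Set.mem_iUnion.1 hm
    obtain ⟨b, hc⟩ := Set.mem_iUnion.1 hc
    exact hmemT (((hslice (max a b)).2.2.2.2.1 (hMmono' (le_max_left a b) hm)).2.1 c
      (hCmono' (le_max_right a b) hc))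
  have hnorm2 : ∀ m ∈ S, ∀ c ∈ T, m * c * star m ∈ T := by
    intro m hm c hc
    obtain ⟨a, hm⟩ := Set.mem_iUnion.1 hm
    obtain ⟨b, hc⟩ := Set.mem_iUnion.1 hc
    exact hmemT (((hslice (max a b)).2.2.2.2.1 (hMmono' (le_max_left a b) hm)).2.2 c
      (hCmono' (le_max_right a b) hc))
  have hdm : ∀ d ∈ T, ∀ m ∈ S, d * m ∈ S := by
    intro d hd m hm
    obtain ⟨b, hd⟩ := Set.mem_iUnion.1 hd
    obtain ⟨a, hm⟩ := Set.mem_iUnion.1 hm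
    exact hmemS ((hslice (max a b)).2.2.2.2.2.1 d (hCmono' (le_max_right a b) hd) m
      (hMmono' (le_max_left a b) hm))
  have hmd : ∀ d ∈ T, ∀ m ∈ S, m * d ∈ S := by
    intro d hd m hm
    obtain ⟨b, hd⟩ := Set.mem_iUnion.1 hd
    obtain ⟨a, hm⟩ := Set.mem_iUnion.1 hm
    exact hmemS ((hslice (max a b)).2.2.2.2.2.2 d (hCmono' (le_max_right a b) hd) m
      (hMmono' (le_max_left a b) hm))
  have prodmem : ∀ {x y : A} {s t : Set A}, x ∈ closure s → y ∈ closure t →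
      (x, y) ∈ closure (s ×ˢ t) := by
    intro x y s t hx hy
    rw [closure_prod_eq]
    exact ⟨hx, hy⟩
  refine ⟨isClosed_closure, subset_closure (hmemS (hslice 0).2.1), ?_, ?_, ?_, ?_, ?_⟩
  · intro x hx y hy
    exact map_mem_closure (f := fun p : A × A => p.1 + p.2) (by fun_prop)
      (prodmem hx hy) (fun p hp => haddS p.1 hp.1 p.2 hp.2)
  · intro z x hx
    exact map_mem_closure (by fun_prop : Continuous fun x : A => z • x) hx
      (fun y hy => hsmulS z y hy)
  · intro m hm
    refine ⟨trivial, ?_, ?_⟩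
    · intro c hc
      exact map_mem_closure (f := fun p : A × A => star p.1 * p.2 * p.1) (by fun_prop)
        (prodmem hm hc) (fun p hp => hnorm1 p.1 hp.1 p.2 hp.2)
    · intro c hc
      exact map_mem_closure (f := fun p : A × A => p.1 * p.2 * star p.1) (by fun_prop)
        (prodmem hm hc) (fun p hp => hnorm2 p.1 hp.1 p.2 hp.2)
  · intro d hd m hm
    exact map_mem_closure (f := fun p : A × A => p.1 * p.2) (by fun_prop)
      (prodmem hd hm) (fun p hp => hdm p.1 hp.1 p.2 hp.2)
  · intro d hd m hm
    exact map_mem_closure (f := fun p : A × A => p.2 * p.1) (by fun_prop)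
      (prodmem hd hm) (fun p hp => hmd p.1 hp.1 p.2 hp.2)
end

section
/- Assume each inclusion C_n ⊆ A_n is regular. Let S be the collection of all subsets F of A of the form F = closure of ⋃_n M_n, where (M_n)_{n∈ℕ} is a sequence such that each M_n is a slice for the inclusion C_n ⊆ A_n and M_n ⊆ M_{n+1} for all n. Then the linear span of ⋃_{F ∈ S} F is dense in A. -/
variable {A : Type*} [NonUnitalCStarAlgebra A]

/-! Every normaliser `m` of `C_n ⊆ A_n` lies in a slice sequence: for `k ≥ n` take the closed
`C_k`-bimodule generated by `m` (and `0` for `k < n`). Its elements are normalisers because the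
relation "`x* c y ∈ C_k` and `x c y* ∈ C_k` for all `c ∈ C_k`" is symmetric and, in each variable,
stable under sums, scalars, limits and multiplication by `C_k`. The normalisers of `C_n ⊆ A_n` are
closed under products and adjoints, so their span is the *-algebra they generate, which is dense
in `A_n` by regularity. Hence the span of the slice closures is dense in every `A_n`, so in `A`. -/

section Adjoin

variable {R E : Type*} [CommSemiring R] [StarRing R] [NonUnitalSemiring E] [StarRing E]
  [Module R E] [IsScalarTower R E E] [SMulCommClass R E E] [StarModule R E]

theorem NonUnitalStarAlgebra.adjoin_toSubmodule_eq_span {s : Set E}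
    (hmul : ∀ x ∈ s, ∀ y ∈ s, x * y ∈ s) (hstar : ∀ x ∈ s, star x ∈ s) :
    (adjoin R s).toSubmodule = Submodule.span R s := by
  rw [adjoin_eq_span, Set.union_eq_self_of_subset_right fun x hx => star_star x ▸ hstar _ hx]
  exact congrArg (fun t : Subsemigroup E => Submodule.span R (t : Set E))
    (Subsemigroup.closure_eq ⟨s, fun ha hb => hmul _ ha _ hb⟩)

end Adjoin

def IsNormalizingPair (D : Set A) (x y : A) : Prop :=
  ∀ c ∈ D, star x * c * y ∈ D ∧ x * c * star y ∈ D

structure IsClosedBimodule (D M : Set A) : Prop where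
  isClosed : IsClosed M
  zero_mem : (0 : A) ∈ M
  add_mem : ∀ x ∈ M, ∀ y ∈ M, x + y ∈ M
  smul_mem : ∀ (z : ℂ), ∀ x ∈ M, z • x ∈ M
  mul_mem_left : ∀ d ∈ D, ∀ x ∈ M, d * x ∈ M
  mul_mem_right : ∀ d ∈ D, ∀ x ∈ M, x * d ∈ M

def closedBimoduleSpan (D s : Set A) : Set A :=
  ⋂₀ {M | IsClosedBimodule D M ∧ s ⊆ M}

section Normalizers

variable {B : NonUnitalStarSubalgebra ℂ A} {D : Set A} {x y : A}

theorem mem_relNormalizers_iff : x ∈ relNormalizers B D ↔ x ∈ B ∧ IsNormalizingPair D x x := by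
  simp only [relNormalizers, IsNormalizingPair, Set.mem_ofPred_eq, SetLike.mem_coe, forall_and]

theorem mul_mem_relNormalizers (hx : x ∈ relNormalizers B D) (hy : y ∈ relNormalizers B D) :
    x * y ∈ relNormalizers B D := by
  obtain ⟨hxB, hx₁, hx₂⟩ := hx
  obtain ⟨hyB, hy₁, hy₂⟩ := hy
  refine ⟨mul_mem hxB hyB, fun c hc => ?_, fun c hc => ?_⟩
  · simpa only [star_mul, mul_assoc] using hy₁ _ (hx₁ c hc)
  · simpa only [star_mul, mul_assoc] using hx₂ _ (hy₂ c hc)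

theorem star_mem_relNormalizers (hx : x ∈ relNormalizers B D) : star x ∈ relNormalizers B D :=
  ⟨star_mem hx.1, by simpa only [star_star] using hx.2.2, by simpa only [star_star] using hx.2.1⟩

theorem adjoin_relNormalizers_eq_span :
    (NonUnitalStarAlgebra.adjoin ℂ (relNormalizers B D) : Set A) =
      Submodule.span ℂ (relNormalizers B D) :=
  congrArg SetLike.coe <| NonUnitalStarAlgebra.adjoin_toSubmodule_eq_span
    (fun _ hx _ hy => mul_mem_relNormalizers hx hy) fun _ => star_mem_relNormalizers

end Normalizers

namespace IsClosedBimodule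

variable {B D D' M : Set A}

theorem isSlice (h : IsClosedBimodule D M) (hM : M ⊆ relNormalizers B D) : IsSlice B D M :=
  ⟨h.isClosed, h.zero_mem, h.add_mem, h.smul_mem, hM, h.mul_mem_left, h.mul_mem_right⟩

theorem mono (h : IsClosedBimodule D' M) (hD : D ⊆ D') : IsClosedBimodule D M :=
  { h with
    mul_mem_left := fun d hd => h.mul_mem_left d (hD hd)
    mul_mem_right := fun d hd => h.mul_mem_right d (hD hd) }

theorem sInter {S : Set (Set A)} (h : ∀ M ∈ S, IsClosedBimodule D M) :
    IsClosedBimodule D (⋂₀ S) where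
  isClosed := isClosed_sInter fun M hM => (h M hM).isClosed
  zero_mem := fun M hM => (h M hM).zero_mem
  add_mem x hx y hy := fun M hM => (h M hM).add_mem x (hx M hM) y (hy M hM)
  smul_mem z x hx := fun M hM => (h M hM).smul_mem z x (hx M hM)
  mul_mem_left d hd x hx := fun M hM => (h M hM).mul_mem_left d hd x (hx M hM)
  mul_mem_right d hd x hx := fun M hM => (h M hM).mul_mem_right d hd x (hx M hM)

end IsClosedBimodule

theorem NonUnitalStarSubalgebra.isClosedBimodule {B : NonUnitalStarSubalgebra ℂ A} {D : Set A}
    (hB : IsClosed (B : Set A)) (hD : D ⊆ B) : IsClosedBimodule D B where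
  isClosed := hB
  zero_mem := zero_mem B
  add_mem _ hx _ hy := add_mem hx hy
  smul_mem z _ hx := SMulMemClass.smul_mem z hx
  mul_mem_left _ hd _ hx := mul_mem (hD hd) hx
  mul_mem_right _ hd _ hx := mul_mem hx (hD hd)

section ClosedBimoduleSpan

variable {D D' M s s' : Set A}

theorem isClosedBimodule_closedBimoduleSpan : IsClosedBimodule D (closedBimoduleSpan D s) :=
  IsClosedBimodule.sInter fun _ hM => hM.1

theorem subset_closedBimoduleSpan : s ⊆ closedBimoduleSpan D s :=
  Set.subset_sInter fun _ hM => hM.2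

theorem closedBimoduleSpan_subset (hM : IsClosedBimodule D M) (hs : s ⊆ M) :
    closedBimoduleSpan D s ⊆ M :=
  Set.sInter_subset_of_mem ⟨hM, hs⟩

theorem closedBimoduleSpan_mono (hD : D ⊆ D') (hs : s ⊆ s') :
    closedBimoduleSpan D s ⊆ closedBimoduleSpan D' s' :=
  closedBimoduleSpan_subset (isClosedBimodule_closedBimoduleSpan.mono hD)
    (hs.trans subset_closedBimoduleSpan)

end ClosedBimoduleSpan

section NormalizingPair

variable {D : NonUnitalStarSubalgebra ℂ A} {s : Set A} {x y : A}

theorem IsNormalizingPair.symm (h : IsNormalizingPair D x y) : IsNormalizingPair D y x := by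
  intro c hc
  obtain ⟨h₁, h₂⟩ := h (star c) (star_mem hc)
  exact ⟨by simpa only [star_mul, star_star, mul_assoc, SetLike.mem_coe] using star_mem h₁,
    by simpa only [star_mul, star_star, mul_assoc, SetLike.mem_coe] using star_mem h₂⟩

theorem isClosedBimodule_setOf_isNormalizingPair (hD : IsClosed (D : Set A)) (x : A) :
    IsClosedBimodule D {y | IsNormalizingPair D x y} where
  isClosed := by
    simp only [IsNormalizingPair, Set.ofPred_forall, Set.ofPred_and]
    exact isClosed_iInter fun c => isClosed_iInter fun _ =>
      (hD.preimage (by fun_prop)).inter (hD.preimage (by fun_prop))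
  zero_mem c _ := by simp only [star_zero, mul_zero, and_self, SetLike.mem_coe, zero_mem]
  add_mem y₁ h₁ y₂ h₂ c hc := by
    simpa only [star_add, mul_add, SetLike.mem_coe] using
      And.intro (add_mem (h₁ c hc).1 (h₂ c hc).1) (add_mem (h₁ c hc).2 (h₂ c hc).2)
  smul_mem z y h c hc := by
    simpa only [star_smul, mul_smul_comm, SetLike.mem_coe] using
      And.intro (SMulMemClass.smul_mem z (h c hc).1) (SMulMemClass.smul_mem (star z) (h c hc).2)
  mul_mem_left d hd y h c hc := by
    simpa only [star_mul, mul_assoc, SetLike.mem_coe] using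
      And.intro (h (c * d) (mul_mem hc hd)).1 (mul_mem (h c hc).2 (star_mem hd))
  mul_mem_right d hd y h c hc := by
    simpa only [star_mul, mul_assoc, SetLike.mem_coe] using
      And.intro (mul_mem (h c hc).1 hd) (h (c * star d) (mul_mem hc (star_mem hd))).2

theorem IsNormalizingPair.of_mem_closedBimoduleSpan (hD : IsClosed (D : Set A))
    (hs : ∀ x ∈ s, ∀ y ∈ s, IsNormalizingPair D x y)
    (hx : x ∈ closedBimoduleSpan D s) (hy : y ∈ closedBimoduleSpan D s) :
    IsNormalizingPair D x y := by
  have hsM : ∀ x ∈ s, closedBimoduleSpan D s ⊆ {y | IsNormalizingPair D x y} := fun x hx =>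
    closedBimoduleSpan_subset (isClosedBimodule_setOf_isNormalizingPair hD x) (hs x hx)
  exact (closedBimoduleSpan_subset (isClosedBimodule_setOf_isNormalizingPair hD y)
    (fun z hz => (hsM z hz hy).symm) hx).symm

theorem isSlice_closedBimoduleSpan {B : NonUnitalStarSubalgebra ℂ A} (hB : IsClosed (B : Set A))
    (hD : IsClosed (D : Set A)) (hDB : (D : Set A) ⊆ B) (hsB : s ⊆ B)
    (hs : ∀ x ∈ s, ∀ y ∈ s, IsNormalizingPair D x y) :
    IsSlice B D (closedBimoduleSpan D s) :=
  isClosedBimodule_closedBimoduleSpan.isSlice fun _ hx => mem_relNormalizers_iff.2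
    ⟨closedBimoduleSpan_subset (B.isClosedBimodule hB hDB) hsB hx,
      .of_mem_closedBimoduleSpan hD hs hx hx⟩

end NormalizingPair

theorem exists_slice_seq_mem_iUnion (A_ C_ : ℕ → NonUnitalStarSubalgebra ℂ A)
    (hAclosed : ∀ n, IsClosed (A_ n : Set A)) (hCclosed : ∀ n, IsClosed (C_ n : Set A))
    (hCmono : ∀ n, (C_ n : Set A) ⊆ (C_ (n + 1) : Set A))
    (hCA : ∀ n, (C_ n : Set A) ⊆ (A_ n : Set A))
    (hNormIncl : ∀ n, relNormalizers (A_ n : Set A) (C_ n : Set A) ⊆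
      relNormalizers (A_ (n + 1) : Set A) (C_ (n + 1) : Set A))
    {n : ℕ} {m : A} (hm : m ∈ relNormalizers (A_ n : Set A) (C_ n : Set A)) :
    ∃ M : ℕ → Set A, (∀ k, IsSlice (A_ k : Set A) (C_ k : Set A) (M k)) ∧
      (∀ k, M k ⊆ M (k + 1)) ∧ m ∈ ⋃ k, M k := by
  have hmk : ∀ k, n ≤ k → m ∈ relNormalizers (A_ k : Set A) (C_ k : Set A) := fun k hk =>
    monotone_nat_of_le_succ hNormIncl hk hm
  refine ⟨fun k => closedBimoduleSpan (C_ k) {x | x = m ∧ n ≤ k}, fun k => ?_,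
    fun k => closedBimoduleSpan_mono (hCmono k) fun x hx => ⟨hx.1, hx.2.trans k.le_succ⟩,
    Set.mem_iUnion_of_mem n (subset_closedBimoduleSpan ⟨rfl, le_rfl⟩)⟩
  refine isSlice_closedBimoduleSpan (hAclosed k) (hCclosed k) (hCA k) ?_ ?_
  · rintro x ⟨rfl, hk⟩
    exact (mem_relNormalizers_iff.1 (hmk k hk)).1
  · rintro x ⟨rfl, hk⟩ y ⟨rfl, -⟩
    exact (mem_relNormalizers_iff.1 (hmk k hk)).2

theorem stmt6_general
    (A_ C_ : ℕ → NonUnitalStarSubalgebra ℂ A)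
    (hAclosed : ∀ n, IsClosed (A_ n : Set A))
    (hCclosed : ∀ n, IsClosed (C_ n : Set A))
    (hCmono : ∀ n, (C_ n : Set A) ⊆ (C_ (n + 1) : Set A))
    (hCA : ∀ n, (C_ n : Set A) ⊆ (A_ n : Set A))
    (hAdense : Dense (⋃ n, (A_ n : Set A)))
    (hNormIncl : ∀ n, relNormalizers (A_ n : Set A) (C_ n : Set A) ⊆
      relNormalizers (A_ (n + 1) : Set A) (C_ (n + 1) : Set A))
    (hRegn : ∀ n, IsRegularIncl (A_ n : Set A) (C_ n : Set A)) :
    Dense ((Submodule.span ℂ (⋃ F ∈ {F : Set A | ∃ M : ℕ → Set A,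
        (∀ n, IsSlice (A_ n : Set A) (C_ n : Set A) (M n)) ∧
        (∀ n, M n ⊆ M (n + 1)) ∧ F = closure (⋃ n, M n)}, F) : Submodule ℂ A) : Set A) := by
  refine dense_closure.1 (hAdense.mono (Set.iUnion_subset fun n => ?_))
  rw [← hRegn n, adjoin_relNormalizers_eq_span]
  refine closure_mono (Submodule.span_le.2 fun m hm => ?_)
  obtain ⟨M, hM, hMmono, hmM⟩ :=
    exists_slice_seq_mem_iUnion A_ C_ hAclosed hCclosed hCmono hCA hNormIncl hm
  exact Submodule.subset_span (Set.mem_biUnion ⟨M, hM, hMmono, rfl⟩ (subset_closure hmM))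

theorem stmt6
    (A_ C_ : ℕ → NonUnitalStarSubalgebra ℂ A)
    (hAclosed : ∀ n, IsClosed (A_ n : Set A))
    (hCclosed : ∀ n, IsClosed (C_ n : Set A))
    (hAmono : ∀ n, (A_ n : Set A) ⊆ (A_ (n + 1) : Set A))
    (hCmono : ∀ n, (C_ n : Set A) ⊆ (C_ (n + 1) : Set A))
    (hCA : ∀ n, (C_ n : Set A) ⊆ (A_ n : Set A))
    (hAdense : Dense (⋃ n, (A_ n : Set A)))
    (hNormIncl : ∀ n, relNormalizers (A_ n : Set A) (C_ n : Set A) ⊆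
      relNormalizers (A_ (n + 1) : Set A) (C_ (n + 1) : Set A))
    (hRegn : ∀ n, IsRegularIncl (A_ n : Set A) (C_ n : Set A)) :
    Dense ((Submodule.span ℂ (⋃ F ∈ {F : Set A | ∃ M : ℕ → Set A,
        (∀ n, IsSlice (A_ n : Set A) (C_ n : Set A) (M n)) ∧
        (∀ n, M n ⊆ M (n + 1)) ∧ F = closure (⋃ n, M n)}, F) : Submodule ℂ A) : Set A) :=
  stmt6_general A_ C_ hAclosed hCclosed hCmono hCA hAdense hNormIncl hRegn
end

section
/- Suppose in addition that C contains an essential closed two-sided ideal that is separable as a topological space, or an essential closed two-sided ideal that is simple (its only closed two-sided ideals are {0} and itself). Then the inclusion C ⊆ A is aperiodic. -/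
variable {A : Type*} [NonUnitalCStarAlgebra A] [PartialOrder A] [StarOrderedRing A]

/-- `X · Y`: the closed linear span of the set of products `x * y`, `x ∈ X`, `y ∈ Y`. -/
def cspanMul (X Y : Set A) : Set A :=
  closure ((Submodule.span ℂ {z : A | ∃ x ∈ X, ∃ y ∈ Y, z = x * y} : Submodule ℂ A) : Set A)

/-- `D` contains an approximate unit for `B`. -/
def HasApproxUnitIn (D B : Set A) : Prop :=
  ∀ b ∈ B, ∀ ε > (0 : ℝ), ∃ d ∈ D, 0 ≤ d ∧ ‖d‖ ≤ 1 ∧ ‖b - d * b‖ < ε ∧ ‖b - b * d‖ < ε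

/-- Every virtual commutant of `D` in `B` is trivial: every continuous linear
`D`-bimodule map `φ : J → B` on a closed two-sided ideal `J` of `D` has range in `D`. -/
def VirtualCommutantsTrivial (B D : Set A) : Prop :=
  ∀ (J : Set A), J ⊆ D → IsClosed J → (0 : A) ∈ J →
    (∀ x ∈ J, ∀ y ∈ J, x + y ∈ J) → (∀ (z : ℂ), ∀ x ∈ J, z • x ∈ J) →
    (∀ d ∈ D, ∀ j ∈ J, d * j ∈ J) → (∀ d ∈ D, ∀ j ∈ J, j * d ∈ J) →
    ∀ (φ : A → A),
      (∀ j ∈ J, φ j ∈ B) →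
      (∀ x ∈ J, ∀ y ∈ J, φ (x + y) = φ x + φ y) →
      (∀ (z : ℂ), ∀ x ∈ J, φ (z • x) = z • φ x) →
      (∃ K : ℝ, ∀ j ∈ J, ‖φ j‖ ≤ K * ‖j‖) →
      (∀ d ∈ D, ∀ j ∈ J, φ (d * j) = d * φ j) →
      (∀ d ∈ D, ∀ j ∈ J, φ (j * d) = φ j * d) →
      ∀ j ∈ J, φ j ∈ D

/-- The inclusion `D ⊆ B` is aperiodic. -/
def IsAperiodicIncl (B D : Set A) : Prop :=
  ∀ b ∈ B, ∀ ε > (0 : ℝ), ∀ c ∈ D, 0 ≤ c → c ≠ 0 →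
    ∃ d ∈ closure {x : A | ∃ y ∈ D, x = c * y * c},
      0 ≤ d ∧ ‖d‖ = 1 ∧ ∃ z ∈ D, ‖d * b * d - z‖ < ε

/-- `J` is a closed two-sided ideal of `D`. -/
def IsClosedIdealOf (J D : Set A) : Prop :=
  J ⊆ D ∧ IsClosed J ∧ (0 : A) ∈ J ∧ (∀ x ∈ J, ∀ y ∈ J, x + y ∈ J) ∧
    (∀ (z : ℂ), ∀ x ∈ J, z • x ∈ J) ∧ (∀ d ∈ D, ∀ j ∈ J, d * j ∈ J ∧ j * d ∈ J)

/-!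
Let `b ∈ A` and `0 ≤ c ∈ C` be nonzero. Approximate `c²` by some `0 ≤ c₀ ∈ C_m` and `cbc` by
some `a ∈ A_n`, and put `N = max m n`. Aperiodicity of `C_N ⊆ A_N`, applied to `a` and the
cut-down `c₁ = (c₀ - δ)₊` with `δ = ‖c‖²/2`, yields `0 ≤ e` of norm one in the hereditary
subalgebra of `c₁` and `z ∈ C_N` with `eae` close to `z`. On that hereditary subalgebra
`c₀ ≥ δ`, so `e c² e ≥ (‖c‖²/4) e²` and hence `M = ‖c e² c‖ ≥ ‖c‖²/4`. Then `d = c e² c / M`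
works: `d b d` is within `(16/‖c‖²) (‖cbc - a‖ + ‖eae - z‖)` of `c e z e c / M² ∈ C`.
-/

open Set

lemma norm_mul_mul_le_of_norm_le_one {E : Type*} [NonUnitalSeminormedRing E] {e : E}
    (he : ‖e‖ ≤ 1) (x : E) : ‖e * x * e‖ ≤ ‖x‖ :=
  calc ‖e * x * e‖ ≤ ‖e‖ * ‖x‖ * ‖e‖ := norm_mul₃_le
    _ ≤ 1 * ‖x‖ * 1 := by gcongr
    _ = ‖x‖ := by ring

lemma norm_smul_conj_sub_le {E : Type*} [NonUnitalSeminormedRing E] [NormedSpace ℝ E]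
    [IsScalarTower ℝ E E] [SMulCommClass ℝ E E] {e : E} (he : ‖e‖ ≤ 1) (r : ℝ) (b c a z : E) :
    ‖(r • (c * (e * e) * c)) * b * (r • (c * (e * e) * c)) - (r * r) • (c * (e * z * e) * c)‖ ≤
      r ^ 2 * ‖c‖ ^ 2 * (‖c * b * c - a‖ + ‖e * a * e - z‖) := by
  set w := e * (e * (c * b * c - a) * e + (e * a * e - z)) * e
  have hw : ‖w‖ ≤ ‖c * b * c - a‖ + ‖e * a * e - z‖ :=
    (norm_mul_mul_le_of_norm_le_one he _).trans <| (norm_add_le _ _).trans <|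
      add_le_add_left (norm_mul_mul_le_of_norm_le_one he _) _
  have hid : (r • (c * (e * e) * c)) * b * (r • (c * (e * e) * c)) -
      (r * r) • (c * (e * z * e) * c) = (r * r) • (c * w * c) := by
    simp only [w, smul_mul_assoc, mul_smul_comm, smul_smul, ← smul_sub]
    congr 1
    noncomm_ring
  calc _ = r ^ 2 * ‖c * w * c‖ := by rw [hid, norm_smul, Real.norm_eq_abs, abs_mul_self, sq]
    _ ≤ r ^ 2 * (‖c‖ * ‖w‖ * ‖c‖) := by gcongr; exact norm_mul₃_le
    _ = r ^ 2 * ‖c‖ ^ 2 * ‖w‖ := by ring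
    _ ≤ r ^ 2 * ‖c‖ ^ 2 * (‖c * b * c - a‖ + ‖e * a * e - z‖) := by gcongr

lemma exists_mem_norm_star_mul_self_sub_lt {E : Type*} [NonUnitalSeminormedRing E] [StarRing E]
    [ContinuousStar E] {T : Set E} {c : E} (hc : c ∈ closure T) {r : ℝ} (hr : 0 < r) :
    ∃ x ∈ T, ‖star c * c - star x * x‖ < r := by
  have hU : IsOpen {x : E | ‖star c * c - star x * x‖ < r} :=
    isOpen_lt (by fun_prop) continuous_const
  obtain ⟨x, hxU, hxT⟩ := mem_closure_iff.mp hc _ hU (by simpa using hr)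
  exact ⟨x, hxT, hxU⟩

section CutDown

variable {R : Type*} [NonUnitalCStarAlgebra R] {δ : ℝ} {a : R}

noncomputable def cutDown (δ : ℝ) (a : R) : R := cfcₙ (fun t : ℝ => max (t - δ) 0) a

lemma cutDown_mem {S : NonUnitalStarSubalgebra ℂ R} (hS : IsClosed (S : Set R)) (ha : a ∈ S) :
    cutDown δ a ∈ S :=
  cfcₙ_mem _ ha

lemma cutDown_mul_self (ha : IsSelfAdjoint a) (hδ : 0 ≤ δ) :
    cutDown δ a * a = cutDown δ a * cutDown δ a + δ • cutDown δ a := by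
  set f : ℝ → ℝ := fun t => max (t - δ) 0
  have hf0 : f 0 = 0 := by simpa [f] using hδ
  calc cutDown δ a * a = cfcₙ (fun t => f t * t) a := by
        rw [cfcₙ_mul f (fun t => t) a, cfcₙ_id' ℝ a]; rfl
    _ = cfcₙ (fun t => f t * f t + δ • f t) a :=
        cfcₙ_congr fun t _ => by
          rcases max_cases (t - δ) 0 with ⟨h, -⟩ | ⟨h, -⟩ <;> simp only [f, h, smul_eq_mul] <;> ring
    _ = _ := by rw [cfcₙ_add _ _ a, cfcₙ_mul f f a, cfcₙ_smul δ f a]; rfl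

end CutDown

section CutDownOrder

variable {δ : ℝ} {a : A}

lemma cutDown_nonneg : 0 ≤ cutDown δ a :=
  cfcₙ_nonneg fun _ _ => le_max_right _ _

lemma norm_cutDown_sub_le (ha : 0 ≤ a) (hδ : 0 ≤ δ) : ‖cutDown δ a - a‖ ≤ δ := by
  have hf0 : max (0 - δ) 0 = 0 := by simpa using hδ
  have hsub : cutDown δ a - a = cfcₙ (fun t : ℝ => max (t - δ) 0 - t) a := by
    rw [cfcₙ_sub _ _ a, cfcₙ_id' ℝ a, cutDown]
  rw [hsub]
  refine norm_cfcₙ_le fun t ht => ?_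
  have ht0 : 0 ≤ t := quasispectrum_nonneg_of_nonneg a ha t ht
  rw [Real.norm_eq_abs, abs_le]
  constructor <;> cases max_cases (t - δ) 0 <;> linarith

lemma cutDown_ne_zero (ha : 0 ≤ a) (hδ : 0 ≤ δ) (h : δ < ‖a‖) : cutDown δ a ≠ 0 := by
  intro h0
  have := norm_cutDown_sub_le ha hδ
  rw [h0, zero_sub, norm_neg] at this
  linarith

lemma smul_star_mul_self_le_of_mem_closure (ha : IsSelfAdjoint a) (hδ : 0 ≤ δ) {t : A}
    (ht : t ∈ closure (range (cutDown δ a * ·))) : δ • (star t * t) ≤ star t * a * t := by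
  set c := cutDown δ a
  have hclosed : IsClosed {t : A | star t * a * t = star t * c * t + δ • (star t * t)} :=
    isClosed_eq (by fun_prop) (by fun_prop)
  have key : star t * a * t = star t * c * t + δ • (star t * t) := by
    refine closure_minimal ?_ hclosed ht
    rintro _ ⟨y, rfl⟩
    have hstar : star (c * y) = star y * c := by
      rw [star_mul, (IsSelfAdjoint.of_nonneg (cutDown_nonneg (δ := δ) (a := a))).star_eq]
    rw [mem_ofPred_eq, hstar]
    calc star y * c * a * (c * y) = star y * (c * a) * c * y := by noncomm_ring
      _ = star y * (c * c + δ • c) * c * y := by rw [cutDown_mul_self ha hδ]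
      _ = _ := by simp only [add_mul, mul_add, smul_mul_assoc, mul_smul_comm, mul_assoc]
  rw [key]
  exact le_add_of_nonneg_left (star_left_conjugate_nonneg cutDown_nonneg t)

end CutDownOrder

lemma sub_norm_smul_le_of_smul_le {a b t : A} {δ : ℝ} (ha : IsSelfAdjoint a)
    (hb : IsSelfAdjoint b) (h : δ • (star t * t) ≤ star t * a * t) :
    (δ - ‖b - a‖) • (star t * t) ≤ star t * b * t := by
  have hab : star t * (a - b) * t ≤ ‖a - b‖ • (star t * t) :=
    CStarAlgebra.star_left_conjugate_le_norm_smul (ha.sub hb)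
  calc (δ - ‖b - a‖) • (star t * t) = δ • (star t * t) - ‖a - b‖ • (star t * t) := by
        rw [sub_smul, norm_sub_rev]
    _ ≤ star t * a * t - star t * (a - b) * t := sub_le_sub h hab
    _ = star t * b * t := by noncomm_ring

lemma mul_sq_norm_le_norm_mul_mul {c d : A} (hc : IsSelfAdjoint c) (hd : IsSelfAdjoint d)
    {η : ℝ} (hη : 0 ≤ η) (h : η • (d * d) ≤ d * (c * c) * d) :
    η * ‖d‖ ^ 2 ≤ ‖c * (d * d) * c‖ := by
  have hdd : 0 ≤ d * d := by simpa [hd.star_eq] using star_mul_self_nonneg d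
  have hnorm : ‖c * (d * d) * c‖ = ‖d * (c * c) * d‖ := by
    have h1 : c * (d * d) * c = star (d * c) * (d * c) := by
      rw [star_mul, hc.star_eq, hd.star_eq]; noncomm_ring
    have h2 : d * (c * c) * d = (d * c) * star (d * c) := by
      rw [star_mul, hc.star_eq, hd.star_eq]; noncomm_ring
    rw [h1, h2, CStarRing.norm_star_mul_self, CStarRing.norm_self_mul_star]
  calc η * ‖d‖ ^ 2 = ‖η • (d * d)‖ := by
        rw [norm_smul, Real.norm_of_nonneg hη, hd.norm_mul_self]
    _ ≤ ‖c * (d * d) * c‖ :=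
        hnorm ▸ CStarAlgebra.norm_le_norm_of_nonneg_of_le (smul_nonneg hη hdd) h

lemma mul_sq_norm_le_of_mem_closure_cutDown {c c₀ e : A} {δ : ℝ} (hc : IsSelfAdjoint c)
    (hc₀ : IsSelfAdjoint c₀) (hδ : ‖c * c - c₀‖ ≤ δ) (he : IsSelfAdjoint e)
    (he_mem : e ∈ closure (range (cutDown δ c₀ * ·))) :
    (δ - ‖c * c - c₀‖) * ‖e‖ ^ 2 ≤ ‖c * (e * e) * c‖ := by
  have h := sub_norm_smul_le_of_smul_le hc₀ hc.mul_self_nonneg.isSelfAdjoint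
    (smul_star_mul_self_le_of_mem_closure hc₀ ((norm_nonneg _).trans hδ) he_mem)
  rw [he.star_eq] at h
  exact mul_sq_norm_le_norm_mul_mul hc he (by linarith) h

lemma exists_aperiodicity_witness_of_approx {B : Set A} {S D : NonUnitalStarSubalgebra ℂ A}
    (hS : IsClosed (S : Set A)) (hBS : IsAperiodicIncl B S) (hSD : S ≤ D)
    {c c₀ : A} (hcD : c ∈ D) (hc : 0 ≤ c) (hc_ne : c ≠ 0) (hc₀S : c₀ ∈ S) (hc₀ : 0 ≤ c₀)
    (hcc₀ : ‖c * c - c₀‖ < ‖c‖ ^ 2 / 4) {a : A} (ha : a ∈ B) (b : A) {ε : ℝ} (hε : 0 < ε)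
    (hcba : ‖c * b * c - a‖ < ε * ‖c‖ ^ 2 / 32) :
    ∃ d ∈ closure {x | ∃ y ∈ (D : Set A), x = c * y * c}, 0 ≤ d ∧ ‖d‖ = 1 ∧
      ∃ z ∈ (D : Set A), ‖d * b * d - z‖ < ε := by
  have hc2 : 0 < ‖c‖ ^ 2 := by positivity
  set δ := ‖c‖ ^ 2 / 2 with hδ_def
  have hδ : 0 ≤ δ := by positivity
  have hc₀norm : δ < ‖c₀‖ := by
    have := norm_sub_norm_le (c * c) c₀
    rw [hc.isSelfAdjoint.norm_mul_self] at this
    linarith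
  set c₁ := cutDown δ c₀
  have hc₁S : c₁ ∈ S := cutDown_mem hS hc₀S
  obtain ⟨e, he, he0, he1, z, hzS, hez⟩ := hBS a ha (ε * ‖c‖ ^ 2 / 32) (by positivity) c₁ hc₁S
    cutDown_nonneg (cutDown_ne_zero hc₀ hδ hc₀norm)
  have heS : e ∈ S := closure_minimal (by
    rintro _ ⟨y, hy, rfl⟩; exact mul_mem (mul_mem hc₁S hy) hc₁S) hS he
  have he_sa : IsSelfAdjoint e := .of_nonneg he0
  have hee : 0 ≤ e * e := by simpa [he_sa.star_eq] using star_mul_self_nonneg e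
  have he_ideal : e ∈ closure (range (c₁ * ·)) := closure_mono (by
    rintro _ ⟨y, -, rfl⟩; exact ⟨y * c₁, (mul_assoc _ _ _).symm⟩) he
  set M := ‖c * (e * e) * c‖
  have hM : ‖c‖ ^ 2 / 4 ≤ M := by
    have h := mul_sq_norm_le_of_mem_closure_cutDown hc.isSelfAdjoint hc₀.isSelfAdjoint
      (by linarith) he_sa he_ideal
    rw [he1] at h
    linarith
  have hMpos : 0 < M := by linarith
  have hMinv : M⁻¹ ≤ 4 / ‖c‖ ^ 2 := by simpa using inv_anti₀ (by positivity) hM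
  have heD : e ∈ D := hSD heS
  refine ⟨M⁻¹ • (c * (e * e) * c), subset_closure ⟨M⁻¹ • (e * e), ?_, ?_⟩,
    smul_nonneg (inv_nonneg.mpr hMpos.le) (conjugate_nonneg_of_nonneg hee hc), ?_,
    (M⁻¹ * M⁻¹) • (c * (e * z * e) * c), ?_, ?_⟩
  · rw [← Complex.coe_smul]
    exact SMulMemClass.smul_mem _ (mul_mem heD heD)
  · rw [mul_smul_comm, smul_mul_assoc]
  · rw [norm_smul, Real.norm_of_nonneg (inv_nonneg.mpr hMpos.le), inv_mul_cancel₀ hMpos.ne']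
  · rw [← Complex.coe_smul]
    exact SMulMemClass.smul_mem _
      (mul_mem (mul_mem hcD (mul_mem (mul_mem heD (hSD hzS)) heD)) hcD)
  · calc _ ≤ M⁻¹ ^ 2 * ‖c‖ ^ 2 * (‖c * b * c - a‖ + ‖e * a * e - z‖) :=
          norm_smul_conj_sub_le he1.le _ _ _ _ _
      _ ≤ (4 / ‖c‖ ^ 2) ^ 2 * ‖c‖ ^ 2 * (‖c * b * c - a‖ + ‖e * a * e - z‖) := by gcongr
      _ < (4 / ‖c‖ ^ 2) ^ 2 * ‖c‖ ^ 2 * (ε * ‖c‖ ^ 2 / 32 + ε * ‖c‖ ^ 2 / 32) := by gcongr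
      _ = ε := by field_simp; ring

theorem stmt13_general
    (A_ C_ : ℕ → NonUnitalStarSubalgebra ℂ A)
    (hCclosed : ∀ n, IsClosed (C_ n : Set A))
    (hAmono : ∀ n, (A_ n : Set A) ⊆ (A_ (n + 1) : Set A))
    (hCmono : ∀ n, (C_ n : Set A) ⊆ (C_ (n + 1) : Set A))
    (hAdense : Dense (⋃ n, (A_ n : Set A)))
    (hAper : ∀ n, IsAperiodicIncl (A_ n : Set A) (C_ n : Set A)) :
    IsAperiodicIncl (Set.univ : Set A) (closure (⋃ k, (C_ k : Set A))) := by
  have hA_mono : Monotone fun n => (A_ n : Set A) := monotone_nat_of_le_succ hAmono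
  have hC_mono : Monotone C_ := monotone_nat_of_le_succ hCmono
  set C := (⨆ k, C_ k).topologicalClosure
  have hC : (C : Set A) = closure (⋃ k, (C_ k : Set A)) := by
    rw [← NonUnitalStarSubalgebra.coe_iSup_of_directed hC_mono.directed_le]; rfl
  rw [← hC]
  intro b _ ε hε c hc hc_nonneg hc_ne
  have hcpos : 0 < ‖c‖ := norm_pos_iff.mpr hc_ne
  obtain ⟨x, hx, hcx⟩ :=
    exists_mem_norm_star_mul_self_sub_lt (hC ▸ hc) (r := ‖c‖ ^ 2 / 4) (by positivity)
  obtain ⟨m, hxm⟩ := mem_iUnion.mp hx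
  obtain ⟨a, ha, hca⟩ :=
    hAdense.exists_dist_lt (c * b * c) (ε := ε * ‖c‖ ^ 2 / 32) (by positivity)
  obtain ⟨n, han⟩ := mem_iUnion.mp ha
  exact exists_aperiodicity_witness_of_approx (hCclosed _) (hAper (max m n))
    ((le_iSup C_ _).trans (NonUnitalStarSubalgebra.le_topologicalClosure _)) hc hc_nonneg hc_ne
    (hC_mono (le_max_left m n) (mul_mem (star_mem hxm) hxm)) (star_mul_self_nonneg x)
    (by rwa [hc_nonneg.isSelfAdjoint.star_eq] at hcx) (hA_mono (le_max_right m n) han) b hε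
    (by rwa [← dist_eq_norm])

theorem stmt13
    (A_ C_ : ℕ → NonUnitalStarSubalgebra ℂ A)
    (hAclosed : ∀ n, IsClosed (A_ n : Set A))
    (hCclosed : ∀ n, IsClosed (C_ n : Set A))
    (hAmono : ∀ n, (A_ n : Set A) ⊆ (A_ (n + 1) : Set A))
    (hCmono : ∀ n, (C_ n : Set A) ⊆ (C_ (n + 1) : Set A))
    (hCA : ∀ n, (C_ n : Set A) ⊆ (A_ n : Set A))
    (hAdense : Dense (⋃ n, (A_ n : Set A)))
    (Pn : ℕ → A → A)
    (hReg : ∀ n, IsRegularIncl (A_ n : Set A) (C_ n : Set A))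
    (hPn : ∀ n, IsCondExpOn (A_ n : Set A) (C_ n : Set A) (Pn n))
    (hPnFaithful : ∀ n, ∀ a ∈ (A_ n : Set A), Pn n (star a * a) = 0 → a = 0)
    (hApprox : ∀ n, HasApproxUnitIn (C_ n : Set A) (A_ n : Set A))
    (hVC : ∀ n, VirtualCommutantsTrivial (A_ n : Set A) (C_ n : Set A))
    (hAper : ∀ n, IsAperiodicIncl (A_ n : Set A) (C_ n : Set A))
    (hAnondeg : ∀ n, cspanMul (A_ n : Set A) (A_ (n + 1) : Set A) = (A_ (n + 1) : Set A))
    (hCnondeg : ∀ n, cspanMul (C_ n : Set A) (C_ (n + 1) : Set A) = (C_ (n + 1) : Set A))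
    (hNormIncl : ∀ n, relNormalizers (A_ n : Set A) (C_ n : Set A) ⊆
      relNormalizers (A_ (n + 1) : Set A) (C_ (n + 1) : Set A))
    (hPnCompat : ∀ n, ∀ a ∈ (A_ n : Set A), Pn (n + 1) a = Pn n a)
    (P : A →L[ℂ] A)
    (hP : ∀ n, ∀ a ∈ (A_ n : Set A), P a = Pn n a)
    (hEss : ∃ I : Set A, IsClosedIdealOf I (closure (⋃ k, (C_ k : Set A))) ∧
      (∀ J : Set A, IsClosedIdealOf J (closure (⋃ k, (C_ k : Set A))) → J ≠ {0} →
        I ∩ J ≠ {0}) ∧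
      (TopologicalSpace.IsSeparable I ∨
        (∀ J : Set A, IsClosedIdealOf J I → J = {0} ∨ J = I))) :
    IsAperiodicIncl (Set.univ : Set A) (closure (⋃ k, (C_ k : Set A))) :=
  stmt13_general A_ C_ hCclosed hAmono hCmono hAdense hAper
end

section
/- Let g ∈ C₀(Y) be nonzero and set V = {y ∈ Y : |g(y)| > ‖g‖/2}. Then for every h ∈ C₀(X) with ‖h‖ = 1 and h(x) = 0 for all x ∉ f(V), there exists y ∈ Y with |h(f(y))|² · |g(y)| > ‖g‖/2; in particular, the supremum of |h(f(y))|² · |g(y)| over y ∈ Y is strictly greater than ‖g‖/2. -/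
open scoped ZeroAtInfty

theorem stmt14 {X Y : Type*} [TopologicalSpace X] [TopologicalSpace Y]
    [LocallyCompactSpace X] [LocallyCompactSpace Y] [T2Space X] [T2Space Y]
    (f : Y → X) (hf : Continuous f) (hfopen : IsOpenMap f)
    (g : C₀(Y, ℂ)) (hg : g ≠ 0)
    (h : C₀(X, ℂ)) (hh : ‖h‖ = 1)
    (hsupp : ∀ x : X, x ∉ f '' {y : Y | ‖g‖ / 2 < ‖g y‖} → h x = 0) :
    (∃ y : Y, ‖g‖ / 2 < ‖h (f y)‖ ^ 2 * ‖g y‖) ∧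
      ‖g‖ / 2 < ⨆ y : Y, ‖h (f y)‖ ^ 2 * ‖g y‖ := by
  -- every point evaluation is bounded by the norm
  have hle : ∀ x : X, ‖h x‖ ≤ 1 := by
    intro x
    rw [← hh, ← ZeroAtInftyContinuousMap.norm_toBCF_eq_norm]
    exact BoundedContinuousFunction.norm_coe_le_norm h.toBCF x
  -- there is a point where ‖h x‖ > 1/2
  have hx₀ : ∃ x : X, 1 / 2 < ‖h x‖ := by
    by_contra hc
    push_neg at hc
    have : ‖h‖ ≤ 1 / 2 := by
      rw [← ZeroAtInftyContinuousMap.norm_toBCF_eq_norm]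
      exact (BoundedContinuousFunction.norm_le (by norm_num)).mpr hc
    linarith [hh ▸ this]
  obtain ⟨x₀, hx₀⟩ := hx₀
  -- the norm function attains its maximum
  have hcont : Continuous fun x : X => ‖h x‖ := (map_continuous h).norm
  have hev : ∀ᶠ x in Filter.cocompact X, ‖h x‖ ≤ ‖h x₀‖ := by
    have := zero_at_infty (h : C₀(X, ℂ))
    have h2 := this.norm
    rw [norm_zero] at h2
    have h3 := Filter.Tendsto.eventually_lt_const (show (0:ℝ) < ‖h x₀‖ by linarith) h2
    filter_upwards [h3] with x hx
    exact hx.le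
  obtain ⟨x₁, hx₁⟩ := hcont.exists_forall_ge' x₀ hev
  have hnorm1 : ‖h x₁‖ = 1 := by
    have hub : ‖h‖ ≤ ‖h x₁‖ := by
      rw [← ZeroAtInftyContinuousMap.norm_toBCF_eq_norm]
      exact (BoundedContinuousFunction.norm_le (le_trans (norm_nonneg _) (hx₁ x₀))).mpr hx₁
    exact le_antisymm (hle x₁) (hh ▸ hub)
  have hne : h x₁ ≠ 0 := by
    intro h0
    rw [h0, norm_zero] at hnorm1
    norm_num at hnorm1
  have hx₁mem : x₁ ∈ f '' {y : Y | ‖g‖ / 2 < ‖g y‖} := by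
    by_contra hc
    exact hne (hsupp x₁ hc)
  obtain ⟨y₀, hy₀, hfy₀⟩ := hx₁mem
  have hval : ‖g‖ / 2 < ‖h (f y₀)‖ ^ 2 * ‖g y₀‖ := by
    rw [hfy₀, hnorm1]
    simpa using hy₀
  refine ⟨⟨y₀, hval⟩, ?_⟩
  have hbdd : BddAbove (Set.range fun y : Y => ‖h (f y)‖ ^ 2 * ‖g y‖) := by
    refine ⟨‖g‖, ?_⟩
    rintro _ ⟨y, rfl⟩
    have h1 : ‖h (f y)‖ ^ 2 ≤ 1 := by
      have := hle (f y)
      nlinarith [norm_nonneg (h (f y))]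
    have h2 : ‖g y‖ ≤ ‖g‖ := by
      rw [← ZeroAtInftyContinuousMap.norm_toBCF_eq_norm]
      exact BoundedContinuousFunction.norm_coe_le_norm g.toBCF y
    calc ‖h (f y)‖ ^ 2 * ‖g y‖ ≤ 1 * ‖g y‖ :=
          mul_le_mul_of_nonneg_right h1 (norm_nonneg _)
      _ = ‖g y‖ := one_mul _
      _ ≤ ‖g‖ := h2
  exact lt_of_lt_of_le hval (le_ciSup hbdd y₀)
end
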